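/- Let D ⊆ ℂ be open, s ∈ D, k a positive integer, and F : D → ℂ a function differentiable k times at s with F(s) ≠ 0. Define K = max_{1≤j≤k} ( |F^{(j)}(s)/F(s)| / j! )^{1/j} and N = max_{1≤j≤k} ( |(F'/F)^{(j-1)}(s)| / j! )^{1/j}. Then K/2 ≤ N ≤ 2K. -/

import Mathlib

/-!
Put `a n = F⁽ⁿ⁾(s) / (F(s) n!)` and `c i = (F'/F)⁽ⁱ⁾(s) / i!`. The Leibniz rule applied to
`F' = (F'/F) · F` gives `a 0 = 1` and `(n + 1) a (n + 1) = ∑_{i ≤ n} c i a (n - i)`, and in these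
terms `K` and `N` are the largest `j`-th roots of `‖a j‖` and `‖c (j - 1)‖ / j`. Solving the
recurrence for its last term `c n` and inducting gives `‖c n‖ ≤ (n + 1) (2K)^(n + 1)`; bounding the
whole right-hand side gives `‖a n‖ ≤ (2N)^n`. In both inductions the factor `2^n` absorbs the
number and the weights of the terms.
-/

open Finset Topology

theorem succ_add_sum_range_succ_mul_two_pow_le (n : ℕ) :
    n + 1 + ∑ i ∈ range n, (i + 1) * 2 ^ (i + 1) ≤ (n + 1) * 2 ^ (n + 1) := by
  induction n with
  | zero => simp
  | succ n ih =>
    rw [sum_range_succ, pow_succ 2 (n + 1)]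
    have : 1 ≤ 2 ^ (n + 1) := Nat.one_le_two_pow
    nlinarith

theorem sum_range_succ_mul_two_pow_sub_le (n : ℕ) :
    ∑ i ∈ range (n + 1), (i + 1) * 2 ^ (n - i) ≤ (n + 1) * 2 ^ (n + 1) :=
  calc ∑ i ∈ range (n + 1), (i + 1) * 2 ^ (n - i)
      ≤ ∑ i ∈ range (n + 1), (n + 1) * 2 ^ (n + 1 - 1 - i) :=
        sum_le_sum fun i hi => Nat.mul_le_mul (by simp at hi; omega) le_rfl
    _ = (n + 1) * ∑ i ∈ range (n + 1), 2 ^ i := by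
        rw [← mul_sum, sum_range_reflect (2 ^ ·) (n + 1)]
    _ ≤ (n + 1) * 2 ^ (n + 1) :=
        Nat.mul_le_mul_left _ (Nat.geomSum_lt le_rfl fun _ => mem_range.mp).le

theorem rpow_one_div_le_iff {x y : ℝ} (hx : 0 ≤ x) (hy : 0 ≤ y) {j : ℕ} (hj : j ≠ 0) :
    x ^ ((1 : ℝ) / j) ≤ y ↔ x ≤ y ^ j := by
  rw [one_div, Real.rpow_inv_le_iff_of_pos hx hy (by positivity), Real.rpow_natCast]

theorem sup'_rpow_one_div_le_iff {s : Finset ℕ} (hs : s.Nonempty) (h0 : ∀ j ∈ s, j ≠ 0)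
    {u : ℕ → ℝ} (hu : ∀ j, 0 ≤ u j) {L : ℝ} (hL : 0 ≤ L) :
    s.sup' hs (fun j => u j ^ ((1 : ℝ) / j)) ≤ L ↔ ∀ j ∈ s, u j ≤ L ^ j := by
  rw [sup'_le_iff]
  exact forall₂_congr fun j hj => rpow_one_div_le_iff (hu j) hL (h0 j hj)

theorem sup'_rpow_one_div_nonneg {s : Finset ℕ} (hs : s.Nonempty) {u : ℕ → ℝ}
    (hu : ∀ j, 0 ≤ u j) : 0 ≤ s.sup' hs fun j => u j ^ ((1 : ℝ) / j) :=
  let ⟨j, hj⟩ := hs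
  le_sup'_of_le _ hj (Real.rpow_nonneg (hu j) _)

section Recurrence

variable {𝕜 : Type*} [RCLike 𝕜] {a c : ℕ → 𝕜} {k : ℕ}

theorem norm_succ_natCast (n : ℕ) : ‖(n + 1 : 𝕜)‖ = n + 1 := by
  exact_mod_cast RCLike.norm_natCast (K := 𝕜) (n + 1)

theorem norm_logDeriv_coeff_le (ha₀ : a 0 = 1)
    (hrec : ∀ n, n + 1 ≤ k → (n + 1 : 𝕜) * a (n + 1) = ∑ i ∈ range (n + 1), c i * a (n - i))
    {K : ℝ} (hK : 0 ≤ K) (ha : ∀ j, 1 ≤ j → j ≤ k → ‖a j‖ ≤ K ^ j) :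
    ∀ n, n + 1 ≤ k → ‖c n‖ ≤ (n + 1) * (2 * K) ^ (n + 1) := by
  intro n
  induction n using Nat.strong_induction_on with
  | _ n ih =>
  intro hn
  have hc : c n = (n + 1 : 𝕜) * a (n + 1) - ∑ i ∈ range n, c i * a (n - i) := by
    rw [hrec n hn, sum_range_succ, Nat.sub_self, ha₀, mul_one, add_sub_cancel_left]
  have hterm : ∀ i ∈ range n, ‖c i * a (n - i)‖ ≤ ((i + 1) * 2 ^ (i + 1) : ℕ) * K ^ (n + 1) := by
    intro i hi
    have hi := mem_range.mp hi
    rw [norm_mul]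
    calc ‖c i‖ * ‖a (n - i)‖ ≤ (i + 1) * (2 * K) ^ (i + 1) * K ^ (n - i) :=
          mul_le_mul (ih i hi (by omega)) (ha _ (by omega) (by omega)) (norm_nonneg _)
            (by positivity)
      _ = ((i + 1) * 2 ^ (i + 1) : ℕ) * K ^ (n + 1) := by
          rw [show n + 1 = (i + 1) + (n - i) by omega]; push_cast; ring
  calc ‖c n‖ ≤ (n + 1) * ‖a (n + 1)‖ + ∑ i ∈ range n, ‖c i * a (n - i)‖ := by
        rw [hc]
        refine (norm_sub_le _ _).trans (add_le_add ?_ (norm_sum_le _ _))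
        rw [norm_mul, norm_succ_natCast]
    _ ≤ (n + 1) * K ^ (n + 1) + ∑ i ∈ range n, ((i + 1) * 2 ^ (i + 1) : ℕ) * K ^ (n + 1) := by
        gcongr with i hi
        · exact ha _ (by omega) hn
        · exact hterm i hi
    _ = ((n + 1 + ∑ i ∈ range n, (i + 1) * 2 ^ (i + 1) : ℕ) : ℝ) * K ^ (n + 1) := by
        rw [← sum_mul]; push_cast; ring
    _ ≤ ((n + 1) * 2 ^ (n + 1) : ℕ) * K ^ (n + 1) := by
        gcongr; exact succ_add_sum_range_succ_mul_two_pow_le n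
    _ = (n + 1) * (2 * K) ^ (n + 1) := by push_cast; ring

theorem norm_coeff_le_of_norm_logDeriv_coeff_le (ha₀ : a 0 = 1)
    (hrec : ∀ n, n + 1 ≤ k → (n + 1 : 𝕜) * a (n + 1) = ∑ i ∈ range (n + 1), c i * a (n - i))
    {N : ℝ} (hN : 0 ≤ N) (hc : ∀ n, n + 1 ≤ k → ‖c n‖ ≤ (n + 1) * N ^ (n + 1)) :
    ∀ n, n ≤ k → ‖a n‖ ≤ (2 * N) ^ n := by
  intro n
  induction n using Nat.strong_induction_on with
  | _ n ih =>
  intro hn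
  rcases n with _ | n
  · simp [ha₀]
  have hterm : ∀ i ∈ range (n + 1),
      ‖c i * a (n - i)‖ ≤ ((i + 1) * 2 ^ (n - i) : ℕ) * N ^ (n + 1) := by
    intro i hi
    have hi := mem_range.mp hi
    rw [norm_mul]
    calc ‖c i‖ * ‖a (n - i)‖ ≤ (i + 1) * N ^ (i + 1) * (2 * N) ^ (n - i) :=
          mul_le_mul (hc i (by omega)) (ih _ (by omega) (by omega)) (norm_nonneg _)
            (by positivity)
      _ = ((i + 1) * 2 ^ (n - i) : ℕ) * N ^ (n + 1) := by
          rw [show n + 1 = (i + 1) + (n - i) by omega]; push_cast; ring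
  have hbound : (n + 1) * ‖a (n + 1)‖ ≤ (n + 1) * (2 * N) ^ (n + 1) :=
    calc (n + 1) * ‖a (n + 1)‖ = ‖∑ i ∈ range (n + 1), c i * a (n - i)‖ := by
          rw [← hrec n hn, norm_mul, norm_succ_natCast]
      _ ≤ ∑ i ∈ range (n + 1), ((i + 1) * 2 ^ (n - i) : ℕ) * N ^ (n + 1) :=
          (norm_sum_le _ _).trans (sum_le_sum hterm)
      _ = ((∑ i ∈ range (n + 1), (i + 1) * 2 ^ (n - i) : ℕ) : ℝ) * N ^ (n + 1) := by
          rw [← sum_mul]; push_cast; ring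
      _ ≤ ((n + 1) * 2 ^ (n + 1) : ℕ) * N ^ (n + 1) := by
          gcongr; exact sum_range_succ_mul_two_pow_sub_le n
      _ = (n + 1) * (2 * N) ^ (n + 1) := by push_cast; ring
  exact le_of_mul_le_mul_left hbound (by positivity)

theorem div_two_le_and_le_two_mul_of_recurrence (hk : 1 ≤ k) (ha₀ : a 0 = 1)
    (hrec : ∀ n, n + 1 ≤ k → (n + 1 : 𝕜) * a (n + 1) = ∑ i ∈ range (n + 1), c i * a (n - i))
    {K N : ℝ} (hK : K = (Icc 1 k).sup' (nonempty_Icc.mpr hk) fun j => ‖a j‖ ^ ((1 : ℝ) / j))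
    (hN : N = (Icc 1 k).sup' (nonempty_Icc.mpr hk) fun j => (‖c (j - 1)‖ / j) ^ ((1 : ℝ) / j)) :
    K / 2 ≤ N ∧ N ≤ 2 * K := by
  have hIcc : ∀ j ∈ Icc 1 k, j ≠ 0 := fun j hj => by simp at hj; omega
  have hK₀ : 0 ≤ K := hK ▸ sup'_rpow_one_div_nonneg _ fun _ => norm_nonneg _
  have hN₀ : 0 ≤ N := hN ▸ sup'_rpow_one_div_nonneg _ fun _ => by positivity
  have ha : ∀ j, 1 ≤ j → j ≤ k → ‖a j‖ ≤ K ^ j := fun j h₁ h₂ =>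
    (sup'_rpow_one_div_le_iff _ hIcc (fun _ => norm_nonneg _) hK₀).1 hK.ge j (mem_Icc.mpr ⟨h₁, h₂⟩)
  have hc : ∀ n, n + 1 ≤ k → ‖c n‖ ≤ (n + 1) * N ^ (n + 1) := fun n hn => by
    have := (sup'_rpow_one_div_le_iff _ hIcc (fun _ => by positivity) hN₀).1 hN.ge (n + 1)
      (mem_Icc.mpr ⟨by omega, hn⟩)
    push_cast at this
    rwa [div_le_iff₀' (by positivity)] at this
  refine ⟨?_, ?_⟩
  · suffices K ≤ 2 * N by linarith
    rw [hK, sup'_rpow_one_div_le_iff _ hIcc (fun _ => norm_nonneg _) (by positivity)]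
    exact fun j hj => norm_coeff_le_of_norm_logDeriv_coeff_le ha₀ hrec hN₀ hc j (mem_Icc.mp hj).2
  · rw [hN, sup'_rpow_one_div_le_iff _ hIcc (fun _ => by positivity) (by positivity)]
    intro j hj
    obtain ⟨i, rfl⟩ : ∃ i, j = i + 1 := ⟨j - 1, by simp at hj; omega⟩
    rw [add_tsub_cancel_right, Nat.cast_succ, div_le_iff₀' (by positivity)]
    exact norm_logDeriv_coeff_le ha₀ hrec hK₀ ha i (mem_Icc.mp hj).2

end Recurrence

section LogDeriv

variable {𝕜 : Type*} [RCLike 𝕜] {F : 𝕜 → 𝕜} {x : 𝕜} {n : ℕ}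

theorem iteratedDeriv_succ_eq_sum_logDeriv (hF : ContDiffAt 𝕜 (n + 1) F x) (hFx : F x ≠ 0) :
    iteratedDeriv (n + 1) F x = ∑ i ∈ range (n + 1),
      n.choose i * iteratedDeriv i (fun z => deriv F z / F z) x * iteratedDeriv (n - i) F x := by
  have hderiv : deriv F =ᶠ[𝓝 x] fun z => deriv F z / F z * F z :=
    (hF.continuousAt.eventually_ne hFx).mono fun z hz => (div_mul_cancel₀ _ hz).symm
  have hF' : ContDiffAt 𝕜 n F x := hF.of_le (by norm_cast; omega)
  have hlogDeriv : ContDiffAt 𝕜 n (fun z => deriv F z / F z) x :=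
    (hF.derivWithin le_rfl).div hF' hFx
  rw [iteratedDeriv_succ', hderiv.iteratedDeriv_eq, iteratedDeriv_fun_mul hlogDeriv hF']

theorem succ_mul_taylorCoeff_eq_sum (hF : ContDiffAt 𝕜 (n + 1) F x) (hFx : F x ≠ 0) :
    (n + 1 : 𝕜) * (iteratedDeriv (n + 1) F x / F x / (n + 1).factorial) =
      ∑ i ∈ range (n + 1), iteratedDeriv i (fun z => deriv F z / F z) x / i.factorial *
        (iteratedDeriv (n - i) F x / F x / (n - i).factorial) := by
  rw [iteratedDeriv_succ_eq_sum_logDeriv hF hFx, sum_div, sum_div, mul_sum]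
  refine sum_congr rfl fun i hi => ?_
  have hin := mem_range_succ_iff.mp hi
  have hchoose : (n.choose i * i.factorial * (n - i).factorial : 𝕜) = n.factorial := by
    exact_mod_cast Nat.choose_mul_factorial_mul_factorial hin
  have : (n.choose i : 𝕜) ≠ 0 := by exact_mod_cast (Nat.choose_pos hin).ne'
  rw [Nat.factorial_succ, Nat.cast_mul, ← hchoose]
  field_simp
  push_cast
  ring

end LogDeriv

theorem stmt4_general (k : ℕ) (hk : 1 ≤ k) (s : ℂ)
    (F : ℂ → ℂ) (hF : ContDiffAt ℂ k F s) (hFs : F s ≠ 0)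
    (K N : ℝ)
    (hK : K = (Finset.Icc 1 k).sup' (Finset.nonempty_Icc.mpr hk)
      (fun j => (‖iteratedDeriv j F s / F s‖ / (j.factorial : ℝ)) ^ ((1 : ℝ) / j)))
    (hN : N = (Finset.Icc 1 k).sup' (Finset.nonempty_Icc.mpr hk)
      (fun j => (‖iteratedDeriv (j - 1) (fun z => deriv F z / F z) s‖ / (j.factorial : ℝ))
        ^ ((1 : ℝ) / j))) :
    K / 2 ≤ N ∧ N ≤ 2 * K := by
  set a : ℕ → ℂ := fun n => iteratedDeriv n F s / F s / n.factorial
  set c : ℕ → ℂ := fun i => iteratedDeriv i (fun z => deriv F z / F z) s / i.factorial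
  have ha₀ : a 0 = 1 := by simp [a, hFs]
  have hrec : ∀ n, n + 1 ≤ k → (n + 1 : ℂ) * a (n + 1) = ∑ i ∈ range (n + 1), c i * a (n - i) :=
    fun n hn => succ_mul_taylorCoeff_eq_sum (hF.of_le (by exact_mod_cast hn)) hFs
  refine div_two_le_and_le_two_mul_of_recurrence hk ha₀ hrec (hK.trans ?_) (hN.trans ?_)
  · simp [a]
  · refine sup'_congr _ rfl fun j hj => ?_
    obtain ⟨i, rfl⟩ : ∃ i, j = i + 1 := ⟨j - 1, by simp at hj; omega⟩
    simp [c, Nat.factorial_succ, div_div, mul_comm]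

/-- Let `D ⊆ ℂ` be open, `s ∈ D`, `k ≥ 1`, and `F` differentiable `k` times at `s` with
`F s ≠ 0`. With `K = max_{1≤j≤k} (|F^{(j)}(s)/F(s)|/j!)^{1/j}` and
`N = max_{1≤j≤k} (|(F'/F)^{(j-1)}(s)|/j!)^{1/j}`, one has `K/2 ≤ N ≤ 2K`. -/
theorem stmt4 (k : ℕ) (hk : 1 ≤ k) (D : Set ℂ) (hD : IsOpen D) (s : ℂ) (hs : s ∈ D)
    (F : ℂ → ℂ) (hF : ContDiffAt ℂ k F s) (hFs : F s ≠ 0)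
    (K N : ℝ)
    (hK : K = (Finset.Icc 1 k).sup' (Finset.nonempty_Icc.mpr hk)
      (fun j => (‖iteratedDeriv j F s / F s‖ / (j.factorial : ℝ)) ^ ((1 : ℝ) / j)))
    (hN : N = (Finset.Icc 1 k).sup' (Finset.nonempty_Icc.mpr hk)
      (fun j => (‖iteratedDeriv (j - 1) (fun z => deriv F z / F z) s‖ / (j.factorial : ℝ))
        ^ ((1 : ℝ) / j))) :
    K / 2 ≤ N ∧ N ≤ 2 * K :=
  stmt4_general k hk s F hF hFs K N hK hN
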